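/- arXiv:2302.07019 — 9 statements merged into one kernel-verified Lean document; each statement's English description precedes it below -/
import Mathlib

section
/- Let p ≥ 1 be a natural number, c a nonzero real number, and f : ℝ → ℝ continuous on [0,1] and continuously differentiable on (0,1], with f(x) = c·x^p + o(x^p) and f′(x) = c·p·x^(p−1) + o(x^(p−1)) as x → 0⁺. Then ε² · (∫₀^ε f′(x)² dx) / (∫₀^ε f(x)² dx) → p²·(2p+1)/(2p−1) as ε → 0⁺. Consequently the generalized Rayleigh quotient of the second-order stiffness against the consistent mass of the cut part diverges like ε^(−2) as the cut size ε tends to zero. -/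
/-! If `g ~ K x^q` as `x → 0⁺`, then `∫₀^ε g ~ K ε^(q+1)/(q+1)`: the remainder `g - K x^q`
is bounded by `δ x^q` near `0`, so its integral is at most `δ ε^(q+1)`. Applied to
`f² ~ c² x^(2p)` and `f′² ~ c²p² x^(2p-2)` this gives mass `~ c² ε^(2p+1)/(2p+1)` and
stiffness `~ c²p² ε^(2p-1)/(2p-1)`, whose quotient times `ε²` is the constant
`p²(2p+1)/(2p-1)`. -/

open MeasureTheory Filter Set Topology Asymptotics

theorem eventually_intervalIntegrable_of_isBigO_pow {E : Type*} [NormedAddCommGroup E]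
    {g : ℝ → E} {q : ℕ}
    (hm : StronglyMeasurableAtFilter g (𝓝[>] 0)) (h : g =O[𝓝[>] 0] fun x => x ^ q) :
    ∀ᶠ ε in 𝓝[>] 0, IntervalIntegrable g volume 0 ε := by
  have hpow : IntegrableAtFilter (fun x : ℝ => x ^ q) (𝓝[>] 0) volume :=
    ((continuous_pow q).integrableAt_nhds 0).filter_mono nhdsWithin_le_nhds
  obtain ⟨s, hs, hgs⟩ := h.integrableAtFilter hm hpow
  obtain ⟨a, ha, has⟩ := mem_nhdsGT_iff_exists_Ioc_subset.mp hs
  filter_upwards [Ioc_mem_nhdsGT ha] with ε hε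
  exact (intervalIntegrable_iff_integrableOn_Ioc_of_le hε.1.le).mpr
    (hgs.mono_set ((Ioc_subset_Ioc_right hε.2).trans has))

theorem intervalIntegral_isLittleO_pow_succ {E : Type*} [NormedAddCommGroup E] [NormedSpace ℝ E]
    {h : ℝ → E} {q : ℕ} (ho : h =o[𝓝[>] 0] fun x => x ^ q) :
    (fun ε => ∫ x in (0:ℝ)..ε, h x) =o[𝓝[>] 0] fun ε => ε ^ (q + 1) := by
  refine IsLittleO.of_bound fun δ hδ => ?_
  obtain ⟨a, ha, hbound⟩ := mem_nhdsGT_iff_exists_Ioc_subset.mp (ho.bound hδ)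
  filter_upwards [Ioc_mem_nhdsGT ha] with ε hε
  have hε0 : 0 < ε := hε.1
  calc ‖∫ x in (0:ℝ)..ε, h x‖
      ≤ ∫ x in (0:ℝ)..ε, δ * x ^ q := by
        refine intervalIntegral.norm_integral_le_of_norm_le hε0.le (ae_of_all _ fun x hx => ?_)
          (intervalIntegral.intervalIntegrable_pow q |>.const_mul δ)
        have hx' : ‖h x‖ ≤ δ * ‖x ^ q‖ := hbound ((Ioc_subset_Ioc_right hε.2) hx)
        rwa [Real.norm_of_nonneg (pow_nonneg hx.1.le q)] at hx'
    _ = δ * ε ^ (q + 1) / (q + 1) := by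
        rw [intervalIntegral.integral_const_mul, integral_pow]
        ring
    _ ≤ δ * ‖ε ^ (q + 1)‖ := by
        rw [Real.norm_of_nonneg (pow_nonneg hε0.le _)]
        exact div_le_self (by positivity) (by linarith [q.cast_nonneg (α := ℝ)])

theorem intervalIntegral_isEquivalent_const_mul_pow {g : ℝ → ℝ} {K : ℝ} {q : ℕ}
    (hK : K ≠ 0) (hm : StronglyMeasurableAtFilter g (𝓝[>] 0))
    (h : g ~[𝓝[>] 0] fun x => K * x ^ q) :
    (fun ε => ∫ x in (0:ℝ)..ε, g x) ~[𝓝[>] 0] fun ε => K / (q + 1) * ε ^ (q + 1) := by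
  have hint := eventually_intervalIntegrable_of_isBigO_pow hm
    (h.isBigO.trans (isBigO_const_mul_self K _ _))
  have hsmall := intervalIntegral_isLittleO_pow_succ
    (h.isLittleO.trans_isBigO (isBigO_const_mul_self K _ _))
  refine IsLittleO.trans_isBigO ?_ (isBigO_self_const_mul (div_ne_zero hK (by positivity)) _ _)
  refine hsmall.congr' ?_ EventuallyEq.rfl
  filter_upwards [hint] with ε hε
  simp only [Pi.sub_apply]
  rw [intervalIntegral.integral_sub hε
      (intervalIntegral.intervalIntegrable_pow q |>.const_mul K),
    intervalIntegral.integral_const_mul, integral_pow]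
  ring

theorem isEquivalent_const_mul_of_tendsto_sub_div {α : Type*} {l : Filter α} {u w : α → ℝ}
    {K : ℝ} (hK : K ≠ 0) (hw : ∀ᶠ x in l, w x ≠ 0)
    (h : Tendsto (fun x => (u x - K * w x) / w x) l (𝓝 0)) :
    u ~[l] fun x => K * w x :=
  ((isLittleO_iff_tendsto' (hw.mono fun _ hx h0 => absurd h0 hx)).mpr h).trans_isBigO
    (isBigO_self_const_mul hK w l)

theorem Asymptotics.IsEquivalent.pow_const_mul_pow {l : Filter ℝ} {u : ℝ → ℝ} {K : ℝ}
    {q : ℕ} (h : u ~[l] fun x => K * x ^ q) (n : ℕ) :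
    u ^ n ~[l] fun x => K ^ n * x ^ (q * n) :=
  (h.pow n).congr_right <| Eventually.of_forall fun x => by
    simp only [Pi.pow_apply, mul_pow, pow_mul]

theorem rayleigh_second_order_consistent_mass_general
    (p : ℕ) (hp : 1 ≤ p) (c : ℝ) (hc : c ≠ 0) (f : ℝ → ℝ)
    (hf : ContinuousOn f (Icc 0 1))
    (hasymp : Tendsto (fun x => (f x - c * x ^ p) / x ^ p) (𝓝[>] (0:ℝ)) (𝓝 0))
    (hasymp' : Tendsto
      (fun x => (deriv f x - c * (p : ℝ) * x ^ (p - 1)) / x ^ (p - 1))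
      (𝓝[>] (0:ℝ)) (𝓝 0)) :
    Tendsto (fun ε =>
        ε ^ 2 * (∫ x in (0:ℝ)..ε, (deriv f x) ^ 2) / (∫ x in (0:ℝ)..ε, (f x) ^ 2))
      (𝓝[>] (0:ℝ))
      (𝓝 ((p : ℝ) ^ 2 * (2 * (p : ℝ) + 1) / (2 * (p : ℝ) - 1))) := by
  have hpow_ne : ∀ n : ℕ, ∀ᶠ x in 𝓝[>] (0:ℝ), x ^ n ≠ 0 := fun n =>
    eventually_mem_nhdsWithin.mono fun x hx => pow_ne_zero n (ne_of_gt hx)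
  have hcp : c * p ≠ 0 := mul_ne_zero hc (Nat.cast_ne_zero.mpr (by omega))
  have hf_equiv := isEquivalent_const_mul_of_tendsto_sub_div hc (hpow_ne p) hasymp
  have hdf_equiv := isEquivalent_const_mul_of_tendsto_sub_div hcp (hpow_ne (p - 1)) hasymp'
  have hmass := intervalIntegral_isEquivalent_const_mul_pow (pow_ne_zero 2 hc)
    ⟨Ioo 0 1, Ioo_mem_nhdsGT one_pos,
      ((hf.mono Ioo_subset_Icc_self).pow 2).aestronglyMeasurable measurableSet_Ioo⟩
    (hf_equiv.pow_const_mul_pow 2)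
  have hstiff := intervalIntegral_isEquivalent_const_mul_pow (pow_ne_zero 2 hcp)
    ((measurable_deriv f).pow_const 2).stronglyMeasurable.stronglyMeasurableAtFilter
    (hdf_equiv.pow_const_mul_pow 2)
  have hquot := ((IsEquivalent.refl (u := fun ε : ℝ => ε ^ 2)).mul hstiff).div hmass
  refine hquot.symm.tendsto_nhds (tendsto_const_nhds.congr' ?_)
  filter_upwards [eventually_mem_nhdsWithin] with ε (hε : 0 < ε)
  have hexp : ε ^ 2 * ε ^ ((p - 1) * 2 + 1) = ε ^ (p * 2 + 1) := by
    rw [← pow_add]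
    congr 1
    omega
  have hcast : (((p - 1) * 2 : ℕ) : ℝ) + 1 = 2 * p - 1 := by
    push_cast [Nat.cast_sub hp]
    ring
  simp only [Pi.mul_apply, Pi.div_apply]
  rw [mul_left_comm, hexp, hcast]
  field_simp
  push_cast
  ring

/-- With `f x = c·x^p + o(x^p)` and `f′ x = c·p·x^(p−1) + o(x^(p−1))`
as `x → 0⁺` (`p ≥ 1`, `c ≠ 0`), the Rayleigh quotient of second-order stiffness
against consistent mass satisfies
`ε² · (∫₀^ε f′² dx)/(∫₀^ε f² dx) → p²·(2p+1)/(2p−1)` as `ε → 0⁺`. -/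
theorem rayleigh_second_order_consistent_mass
    (p : ℕ) (hp : 1 ≤ p) (c : ℝ) (hc : c ≠ 0) (f : ℝ → ℝ)
    (hf : ContinuousOn f (Icc 0 1))
    (hdf : DifferentiableOn ℝ f (Ioc 0 1))
    (hdf' : ContinuousOn (deriv f) (Ioc 0 1))
    (hasymp : Tendsto (fun x => (f x - c * x ^ p) / x ^ p) (𝓝[>] (0:ℝ)) (𝓝 0))
    (hasymp' : Tendsto
      (fun x => (deriv f x - c * (p : ℝ) * x ^ (p - 1)) / x ^ (p - 1))
      (𝓝[>] (0:ℝ)) (𝓝 0)) :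
    Tendsto (fun ε =>
        ε ^ 2 * (∫ x in (0:ℝ)..ε, (deriv f x) ^ 2) / (∫ x in (0:ℝ)..ε, (f x) ^ 2))
      (𝓝[>] (0:ℝ))
      (𝓝 ((p : ℝ) ^ 2 * (2 * (p : ℝ) + 1) / (2 * (p : ℝ) - 1))) :=
  rayleigh_second_order_consistent_mass_general p hp c hc f hf hasymp hasymp'
end

section
/- Let p ≥ 1 be a natural number, c > 0 a real number, and f : ℝ → ℝ continuous on [0,1] and continuously differentiable on (0,1], with f(x) = c·x^p + o(x^p) and f′(x) = c·p·x^(p−1) + o(x^(p−1)) as x → 0⁺. Then ε^(2−p) · (∫₀^ε f′(x)² dx) / (∫₀^ε f(x) dx) → c·p²·(p+1)/(2p−1) as ε → 0⁺. In particular, for p = 1 the quotient of stiffness to row-sum lumped mass of the cut part diverges like ε^(−1), while for p ≥ 2 it remains bounded as ε → 0⁺. -/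
open MeasureTheory Filter Set Topology

/-! Substituting the asymptotics into the integrals gives `∫₀^ε f ~ c ε^(p+1)/(p+1)` and
`∫₀^ε f′² ~ c²p² ε^(2p-1)/(2p-1)`, and the quotient of these two is the claimed limit times
`ε^(p-2)`. Both asymptotics are instances of one fact: if `g x / x^q → L` as `x → 0⁺`, then
`(∫₀^ε g) / ε^(q+1) → L/(q+1)`, obtained by integrating the bound
`|g x - L x^q| ≤ η x^q`, valid near `0`, against `∫₀^ε x^q = ε^(q+1)/(q+1)`. -/

section PowerAsymptotics

variable {g : ℝ → ℝ} {q : ℕ} {L : ℝ}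

lemma tendsto_div_pow_of_tendsto_sub_mul_pow_div_pow
    (h : Tendsto (fun x => (g x - L * x ^ q) / x ^ q) (𝓝[>] 0) (𝓝 0)) :
    Tendsto (fun x => g x / x ^ q) (𝓝[>] 0) (𝓝 L) := by
  refine (zero_add L ▸ h.add_const L).congr' ?_
  filter_upwards [self_mem_nhdsWithin] with x (hx : 0 < x)
  field_simp
  ring

lemma abs_integral_sub_le_of_abs_sub_le {ε η : ℝ} (hε : 0 ≤ ε) (hg : ContinuousOn g (Ioc 0 ε))
    (hbound : ∀ x ∈ Ioc 0 ε, |g x - L * x ^ q| ≤ η * x ^ q) :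
    |(∫ x in 0..ε, g x) - L * (ε ^ (q + 1) / (q + 1))| ≤ η * (ε ^ (q + 1) / (q + 1)) := by
  have hpow : ∫ x in 0..ε, x ^ q = ε ^ (q + 1) / (q + 1) := by simp [integral_pow]
  have hbound_ae : ∀ᵐ x ∂volume.restrict (uIoc 0 ε), ‖g x - L * x ^ q‖ ≤ η * x ^ q := by
    rw [uIoc_of_le hε]
    exact (ae_restrict_iff' measurableSet_Ioc).2 (.of_forall hbound)
  have hmajorant : IntervalIntegrable (fun x => η * x ^ q) volume 0 ε :=
    (intervalIntegral.intervalIntegrable_pow q).const_mul η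
  have hpow_int : IntervalIntegrable (fun x => L * x ^ q) volume 0 ε :=
    (intervalIntegral.intervalIntegrable_pow q).const_mul L
  have hrem_int : IntervalIntegrable (fun x => g x - L * x ^ q) volume 0 ε := by
    refine hmajorant.mono_fun' ?_ hbound_ae
    rw [uIoc_of_le hε]
    exact (hg.sub (continuousOn_const.mul (continuousOn_pow q))).aestronglyMeasurable
      measurableSet_Ioc
  have hg_int : IntervalIntegrable g volume 0 ε := by simpa using hrem_int.add hpow_int
  calc |(∫ x in 0..ε, g x) - L * (ε ^ (q + 1) / (q + 1))|
      = ‖∫ x in 0..ε, (g x - L * x ^ q)‖ := by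
        rw [intervalIntegral.integral_sub hg_int hpow_int, intervalIntegral.integral_const_mul,
          hpow, Real.norm_eq_abs]
    _ ≤ ∫ x in 0..ε, η * x ^ q := by
        refine intervalIntegral.norm_integral_le_of_norm_le hε ?_ hmajorant
        exact .of_forall fun x hx => hbound x hx
    _ = η * (ε ^ (q + 1) / (q + 1)) := by rw [intervalIntegral.integral_const_mul, hpow]

theorem tendsto_integral_div_pow_succ {a : ℝ} (ha : 0 < a) (hg : ContinuousOn g (Ioc 0 a))
    (hlim : Tendsto (fun x => g x / x ^ q) (𝓝[>] 0) (𝓝 L)) :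
    Tendsto (fun ε => (∫ x in 0..ε, g x) / ε ^ (q + 1)) (𝓝[>] 0) (𝓝 (L / (q + 1))) := by
  rw [Metric.tendsto_nhds]
  intro η hη
  have hclose : ∀ᶠ x in 𝓝[>] (0 : ℝ), |g x - L * x ^ q| ≤ η / 2 * x ^ q := by
    filter_upwards [Metric.tendsto_nhds.1 hlim (η / 2) (by positivity), self_mem_nhdsWithin]
      with x hx (hx0 : 0 < x)
    have hxq : 0 < x ^ q := pow_pos hx0 q
    rw [show g x - L * x ^ q = (g x / x ^ q - L) * x ^ q by field_simp, abs_mul,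
      abs_of_pos hxq]
    exact mul_le_mul_of_nonneg_right hx.le hxq.le
  obtain ⟨δ, hδ, hδclose⟩ := (nhdsGT_basis (0 : ℝ)).eventually_iff.1 hclose
  filter_upwards [Ioo_mem_nhdsGT (lt_min hδ ha)] with ε ⟨hε, hεδa⟩
  have hE : 0 < ε ^ (q + 1) := pow_pos hε _
  have key := abs_integral_sub_le_of_abs_sub_le hε.le
    (hg.mono (Ioc_subset_Ioc_right (hεδa.le.trans (min_le_right _ _))))
    fun x hx => hδclose ⟨hx.1, hx.2.trans_lt (hεδa.trans_le (min_le_left _ _))⟩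
  have hshrink : ε ^ (q + 1) / (q + 1) ≤ ε ^ (q + 1) :=
    div_le_self hE.le (le_add_of_nonneg_left q.cast_nonneg)
  rw [Real.dist_eq, show (∫ x in 0..ε, g x) / ε ^ (q + 1) - L / (q + 1)
      = ((∫ x in 0..ε, g x) - L * (ε ^ (q + 1) / (q + 1))) / ε ^ (q + 1) by field_simp,
    abs_div, abs_of_pos hE, div_lt_iff₀ hE]
  nlinarith

end PowerAsymptotics

theorem rayleigh_second_order_lumped_mass_general
    (p : ℕ) (hp : 1 ≤ p) (c : ℝ) (hc : 0 < c) (f : ℝ → ℝ)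
    (hf : ContinuousOn f (Icc 0 1))
    (hdf' : ContinuousOn (deriv f) (Ioc 0 1))
    (hasymp : Tendsto (fun x => (f x - c * x ^ p) / x ^ p) (𝓝[>] (0:ℝ)) (𝓝 0))
    (hasymp' : Tendsto
      (fun x => (deriv f x - c * (p : ℝ) * x ^ (p - 1)) / x ^ (p - 1))
      (𝓝[>] (0:ℝ)) (𝓝 0)) :
    Tendsto (fun ε =>
        ε ^ ((2 : ℤ) - (p : ℤ)) * (∫ x in (0:ℝ)..ε, (deriv f x) ^ 2) /
          (∫ x in (0:ℝ)..ε, f x))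
      (𝓝[>] (0:ℝ))
      (𝓝 (c * (p : ℝ) ^ 2 * ((p : ℝ) + 1) / (2 * (p : ℝ) - 1))) := by
  obtain ⟨k, rfl⟩ : ∃ k, p = k + 1 := ⟨p - 1, by omega⟩
  rw [Nat.add_sub_cancel] at hasymp'
  have hmass := tendsto_integral_div_pow_succ one_pos (hf.mono Ioc_subset_Icc_self)
    (tendsto_div_pow_of_tendsto_sub_mul_pow_div_pow hasymp)
  have hstiff := tendsto_integral_div_pow_succ (g := fun x => deriv f x ^ 2) (q := 2 * k) one_pos
      (hdf'.pow 2) <| by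
    simpa only [div_pow, ← pow_mul'] using
      (tendsto_div_pow_of_tendsto_sub_mul_pow_div_pow hasymp').pow 2
  have hmass_ne : c / (((k + 1 : ℕ) : ℝ) + 1) ≠ 0 := by positivity
  convert (hstiff.div hmass hmass_ne).congr' ?_ using 2
  · have hodd : (2 * k + 1 : ℝ) ≠ 0 := by positivity
    push_cast
    rw [show 2 * ((k : ℝ) + 1) - 1 = 2 * k + 1 by ring]
    field_simp
  · filter_upwards [self_mem_nhdsWithin] with ε (hε : 0 < ε)
    rw [show (2 : ℤ) - ((k + 1 : ℕ) : ℤ) = ((k + 2 : ℕ) : ℤ) - ((2 * k + 1 : ℕ) : ℤ) by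
        push_cast; ring, zpow_sub₀ hε.ne', zpow_natCast, zpow_natCast, Pi.div_apply]
    field_simp

/-- With `f x = c·x^p + o(x^p)` and `f′ x = c·p·x^(p−1) + o(x^(p−1))`
as `x → 0⁺` (`p ≥ 1`, `c > 0`), the quotient of second-order stiffness against
row-sum lumped mass satisfies
`ε^(2−p) · (∫₀^ε f′² dx)/(∫₀^ε f dx) → c·p²·(p+1)/(2p−1)` as `ε → 0⁺`. -/
theorem rayleigh_second_order_lumped_mass
    (p : ℕ) (hp : 1 ≤ p) (c : ℝ) (hc : 0 < c) (f : ℝ → ℝ)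
    (hf : ContinuousOn f (Icc 0 1))
    (hdf : DifferentiableOn ℝ f (Ioc 0 1))
    (hdf' : ContinuousOn (deriv f) (Ioc 0 1))
    (hasymp : Tendsto (fun x => (f x - c * x ^ p) / x ^ p) (𝓝[>] (0:ℝ)) (𝓝 0))
    (hasymp' : Tendsto
      (fun x => (deriv f x - c * (p : ℝ) * x ^ (p - 1)) / x ^ (p - 1))
      (𝓝[>] (0:ℝ)) (𝓝 0)) :
    Tendsto (fun ε =>
        ε ^ ((2 : ℤ) - (p : ℤ)) * (∫ x in (0:ℝ)..ε, (deriv f x) ^ 2) /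
          (∫ x in (0:ℝ)..ε, f x))
      (𝓝[>] (0:ℝ))
      (𝓝 (c * (p : ℝ) ^ 2 * ((p : ℝ) + 1) / (2 * (p : ℝ) - 1))) :=
  rayleigh_second_order_lumped_mass_general p hp c hc f hf hdf' hasymp hasymp'
end

section
/- Let p ≥ 2 be a natural number, c a nonzero real number, and f : ℝ → ℝ continuous on [0,1] and twice continuously differentiable on (0,1], with f(x) = c·x^p + o(x^p) and f″(x) = c·p·(p−1)·x^(p−2) + o(x^(p−2)) as x → 0⁺. Then ε⁴ · (∫₀^ε f″(x)² dx) / (∫₀^ε f(x)² dx) → p²·(p−1)²·(2p+1)/(2p−3) as ε → 0⁺. Consequently the generalized Rayleigh quotient of the fourth-order stiffness against the consistent mass of the cut part diverges like ε^(−4) as the cut size ε tends to zero. -/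
open MeasureTheory Filter Set Topology

/-!
Both integrands are asymptotic to monomials at `0⁺`: `f² ~ c² x^(2p)` and
`f″² ~ c² p² (p-1)² x^(2p-4)`. A function `h` with `h x ~ L x^q` satisfies
`∫₀^ε h ~ L ε^(q+1)/(q+1)`, because a pointwise bound `|h x - L x^q| ≤ δ x^q` on `(0, ε]`
integrates to `|∫₀^ε h - L ε^(q+1)/(q+1)| ≤ δ ε^(q+1)/(q+1)`. Hence the numerator is
`~ c² p² (p-1)² ε^(2p-3)/(2p-3)` and the denominator `~ c² ε^(2p+1)/(2p+1)`; their quotient is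
`ε^(-4)` times the claimed constant.
-/

lemma tendsto_sq_div_pow_two_mul_of_tendsto_sub_div_pow {g : ℝ → ℝ} {a : ℝ} {q : ℕ}
    (hg : Tendsto (fun x => (g x - a * x ^ q) / x ^ q) (𝓝[>] 0) (𝓝 0)) :
    Tendsto (fun x => g x ^ 2 / x ^ (2 * q)) (𝓝[>] 0) (𝓝 (a ^ 2)) := by
  have hsq := (hg.add_const a).pow 2
  rw [zero_add] at hsq
  refine hsq.congr' ?_
  filter_upwards [self_mem_nhdsWithin] with x (hx : 0 < x)
  field_simp
  ring

lemma eventually_abs_sub_mul_pow_le_of_tendsto_div_pow {h : ℝ → ℝ} {q : ℕ} {L δ : ℝ}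
    (hlim : Tendsto (fun x => h x / x ^ q) (𝓝[>] 0) (𝓝 L)) (hδ : 0 < δ) :
    ∀ᶠ x in 𝓝[>] 0, |h x - L * x ^ q| ≤ δ * x ^ q := by
  filter_upwards [Metric.tendsto_nhds.mp hlim δ hδ, self_mem_nhdsWithin] with x hdist (hx : 0 < x)
  have hxq : 0 < x ^ q := pow_pos hx q
  rw [Real.dist_eq, div_sub' hxq.ne', abs_div, abs_of_pos hxq, div_lt_iff₀ hxq,
    mul_comm (x ^ q)] at hdist
  exact hdist.le

section PointwiseBound

variable {h : ℝ → ℝ} {q : ℕ} {L δ ε : ℝ}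

lemma intervalIntegrable_of_abs_sub_mul_pow_le (hε : 0 ≤ ε)
    (hmeas : AEStronglyMeasurable h (volume.restrict (Ioc 0 ε)))
    (hbound : ∀ x ∈ Ioc 0 ε, |h x - L * x ^ q| ≤ δ * x ^ q) :
    IntervalIntegrable h volume 0 ε := by
  rw [intervalIntegrable_iff_integrableOn_Ioc_of_le hε]
  refine Integrable.mono' (g := fun x => (|L| + δ) * x ^ q)
    (Continuous.integrableOn_Ioc (by fun_prop)) hmeas
    (ae_restrict_of_forall_mem measurableSet_Ioc fun x hx => ?_)
  have hxq : 0 ≤ x ^ q := pow_nonneg hx.1.le q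
  have hLx : |L * x ^ q| = |L| * x ^ q := by rw [abs_mul, abs_of_nonneg hxq]
  calc ‖h x‖ = |(h x - L * x ^ q) + L * x ^ q| := by rw [Real.norm_eq_abs, sub_add_cancel]
    _ ≤ |h x - L * x ^ q| + |L * x ^ q| := abs_add_le _ _
    _ ≤ (|L| + δ) * x ^ q := by linarith [hbound x hx]

lemma abs_integral_sub_le_of_abs_sub_mul_pow_le (hε : 0 ≤ ε)
    (hmeas : AEStronglyMeasurable h (volume.restrict (Ioc 0 ε)))
    (hbound : ∀ x ∈ Ioc 0 ε, |h x - L * x ^ q| ≤ δ * x ^ q) :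
    |(∫ x in (0 : ℝ)..ε, h x) - L * ε ^ (q + 1) / (q + 1)| ≤ δ * ε ^ (q + 1) / (q + 1) := by
  have hpow : ∀ a : ℝ, ∫ x in (0 : ℝ)..ε, a * x ^ q = a * ε ^ (q + 1) / (q + 1) := fun a => by
    rw [intervalIntegral.integral_const_mul, integral_pow]
    ring_nf
  have hsub : (∫ x in (0 : ℝ)..ε, h x) - L * ε ^ (q + 1) / (q + 1)
      = ∫ x in (0 : ℝ)..ε, (h x - L * x ^ q) := by
    rw [intervalIntegral.integral_sub (g := fun x => L * x ^ q)
      (intervalIntegrable_of_abs_sub_mul_pow_le hε hmeas hbound)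
      ((continuous_const.mul (continuous_pow q)).intervalIntegrable 0 ε), hpow]
  rw [hsub, ← hpow]
  exact intervalIntegral.norm_integral_le_of_norm_le hε
    (ae_of_all _ fun x hx => (Real.norm_eq_abs _).trans_le (hbound x hx))
    ((continuous_const.mul (continuous_pow q)).intervalIntegrable 0 ε)

end PointwiseBound

theorem tendsto_integral_div_pow_of_tendsto_div_pow {h : ℝ → ℝ} {q : ℕ} {L b : ℝ} (hb : 0 < b)
    (hmeas : AEStronglyMeasurable h (volume.restrict (Ioc 0 b)))
    (hlim : Tendsto (fun x => h x / x ^ q) (𝓝[>] 0) (𝓝 L)) :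
    Tendsto (fun ε => (∫ x in (0 : ℝ)..ε, h x) / ε ^ (q + 1)) (𝓝[>] 0) (𝓝 (L / (q + 1))) := by
  rw [Metric.tendsto_nhds]
  intro δ hδ
  obtain ⟨a, ha, hIoo⟩ := mem_nhdsGT_iff_exists_Ioo_subset.mp
    (eventually_abs_sub_mul_pow_le_of_tendsto_div_pow hlim (half_pos hδ))
  filter_upwards [Ioo_mem_nhdsGT (lt_min ha hb)] with ε hε
  have hε0 : 0 < ε := hε.1
  have hεq : 0 < ε ^ (q + 1) := pow_pos hε0 _
  have hbound := abs_integral_sub_le_of_abs_sub_mul_pow_le (q := q) (L := L) hε0.le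
    (hmeas.mono_measure (Measure.restrict_mono (Ioc_subset_Ioc_right
      (hε.2.le.trans (min_le_right _ _))) le_rfl))
    (fun x hx => hIoo ⟨hx.1, hx.2.trans_lt (hε.2.trans_le (min_le_left _ _))⟩)
  have hdist : dist ((∫ x in (0 : ℝ)..ε, h x) / ε ^ (q + 1)) (L / (q + 1))
      = |(∫ x in (0 : ℝ)..ε, h x) - L * ε ^ (q + 1) / (q + 1)| / ε ^ (q + 1) := by
    rw [Real.dist_eq, ← abs_of_pos hεq, ← abs_div, abs_of_pos hεq]
    congr 1
    field_simp
  rw [hdist, div_lt_iff₀ hεq]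
  calc _ ≤ δ / 2 * ε ^ (q + 1) / (q + 1) := hbound
    _ ≤ δ / 2 * ε ^ (q + 1) := div_le_self (by positivity) (by linarith)
    _ < δ * ε ^ (q + 1) := by nlinarith

theorem rayleigh_fourth_order_consistent_mass_general
    (p : ℕ) (hp : 2 ≤ p) (c : ℝ) (hc : c ≠ 0) (f : ℝ → ℝ)
    (hf : ContinuousOn f (Icc 0 1))
    (hasymp : Tendsto (fun x => (f x - c * x ^ p) / x ^ p) (𝓝[>] (0:ℝ)) (𝓝 0))
    (hasymp2 : Tendsto
      (fun x => (deriv (deriv f) x - c * (p : ℝ) * ((p : ℝ) - 1) * x ^ (p - 2)) /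
        x ^ (p - 2))
      (𝓝[>] (0:ℝ)) (𝓝 0)) :
    Tendsto (fun ε =>
        ε ^ 4 * (∫ x in (0:ℝ)..ε, (deriv (deriv f) x) ^ 2) /
          (∫ x in (0:ℝ)..ε, (f x) ^ 2))
      (𝓝[>] (0:ℝ))
      (𝓝 ((p : ℝ) ^ 2 * ((p : ℝ) - 1) ^ 2 * (2 * (p : ℝ) + 1) / (2 * (p : ℝ) - 3))) := by
  have hmass := tendsto_integral_div_pow_of_tendsto_div_pow (h := fun x => f x ^ 2) one_pos
    (((hf.pow 2).aestronglyMeasurable measurableSet_Icc).mono_measure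
      (Measure.restrict_mono Ioc_subset_Icc_self le_rfl))
    (tendsto_sq_div_pow_two_mul_of_tendsto_sub_div_pow hasymp)
  have hstiff := tendsto_integral_div_pow_of_tendsto_div_pow one_pos
    ((measurable_deriv _).pow_const 2).aestronglyMeasurable
    (tendsto_sq_div_pow_two_mul_of_tendsto_sub_div_pow hasymp2)
  have hlimit := hstiff.div hmass (div_ne_zero (pow_ne_zero 2 hc) (by positivity))
  have hvalue : (c * p * (p - 1)) ^ 2 / (((2 * (p - 2) : ℕ) : ℝ) + 1) / (c ^ 2 / ((2 * p : ℕ) + 1))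
      = (p : ℝ) ^ 2 * ((p : ℝ) - 1) ^ 2 * (2 * (p : ℝ) + 1) / (2 * (p : ℝ) - 3) := by
    push_cast [Nat.cast_sub hp]
    field_simp
    ring
  rw [hvalue] at hlimit
  refine hlimit.congr' ?_
  filter_upwards [self_mem_nhdsWithin] with ε (hε : 0 < ε)
  have hε4 : ε ^ (2 * p + 1) = ε ^ 4 * ε ^ (2 * (p - 2) + 1) := by
    rw [← pow_add, show 4 + (2 * (p - 2) + 1) = 2 * p + 1 by omega]
  simp only [Pi.div_apply]
  rw [hε4, div_div_eq_mul_div]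
  field_simp

/-- With `f x = c·x^p + o(x^p)` and `f″ x = c·p·(p−1)·x^(p−2) + o(x^(p−2))`
as `x → 0⁺` (`p ≥ 2`, `c ≠ 0`), the Rayleigh quotient of fourth-order stiffness
against consistent mass satisfies
`ε⁴ · (∫₀^ε f″² dx)/(∫₀^ε f² dx) → p²·(p−1)²·(2p+1)/(2p−3)` as `ε → 0⁺`. -/
theorem rayleigh_fourth_order_consistent_mass
    (p : ℕ) (hp : 2 ≤ p) (c : ℝ) (hc : c ≠ 0) (f : ℝ → ℝ)
    (hf : ContinuousOn f (Icc 0 1))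
    (hdf : DifferentiableOn ℝ f (Ioc 0 1))
    (hdf2 : DifferentiableOn ℝ (deriv f) (Ioc 0 1))
    (hdf2' : ContinuousOn (deriv (deriv f)) (Ioc 0 1))
    (hasymp : Tendsto (fun x => (f x - c * x ^ p) / x ^ p) (𝓝[>] (0:ℝ)) (𝓝 0))
    (hasymp2 : Tendsto
      (fun x => (deriv (deriv f) x - c * (p : ℝ) * ((p : ℝ) - 1) * x ^ (p - 2)) /
        x ^ (p - 2))
      (𝓝[>] (0:ℝ)) (𝓝 0)) :
    Tendsto (fun ε =>
        ε ^ 4 * (∫ x in (0:ℝ)..ε, (deriv (deriv f) x) ^ 2) /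
          (∫ x in (0:ℝ)..ε, (f x) ^ 2))
      (𝓝[>] (0:ℝ))
      (𝓝 ((p : ℝ) ^ 2 * ((p : ℝ) - 1) ^ 2 * (2 * (p : ℝ) + 1) / (2 * (p : ℝ) - 3))) :=
  rayleigh_fourth_order_consistent_mass_general p hp c hc f hf hasymp hasymp2
end

section
/- Let d ≥ 1 and p ≥ 1 be integers, ε > 0, and define g : ℝ^d → ℝ by g(x) = ∏_{i=1}^d x_i^p. Then, with all integrals taken over the cube (0,ε)^d, (∫ ‖∇g(x)‖² dx) / (∫ g(x)² dx) = d·p²·(2p+1)/(2p−1) · ε^(−2), where ‖∇g‖² = Σ_{i=1}^d (∂g/∂x_i)². Consequently the generalized Rayleigh quotient of the second-order stiffness against the consistent mass of a corner-cut basis function diverges like ε^(−2) as the corner-cut size ε tends to zero, for every polynomial degree p and every spatial dimension d. -/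
/-!
For a separable function `g x = ∏ i, F (x i)` the square of the `k`-th partial derivative is
again separable, with `F' ^ 2` in the `k`-th factor and `F ^ 2` in the others, so by Fubini its
integral over a cube `sᵈ` is `(∫ₛ F' ^ 2) * (∫ₛ F ^ 2) ^ (d - 1)`. Hence a one-variable relation
`∫ₛ F' ^ 2 = r * ∫ₛ F ^ 2` makes the stiffness integral exactly `d * r` times the mass integral.
For `F t = t ^ p` on `(0, ε)`, `∫₀^ε t ^ n = ε ^ (n + 1) / (n + 1)` gives
`r = p ^ 2 (2p + 1) / ((2p - 1) ε ^ 2)`.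
-/

open MeasureTheory Set

section Separable

variable {ι : Type*} [Fintype ι]

theorem volume_restrict_univ_pi (s : ι → Set ℝ) :
    (volume : Measure (ι → ℝ)).restrict (univ.pi s) = .pi fun i => volume.restrict (s i) := by
  rw [volume_pi, Measure.restrict_pi_pi]

theorem setIntegral_univ_pi_prod (s : ι → Set ℝ) (f : ι → ℝ → ℝ) :
    ∫ x in univ.pi s, ∏ i, f i (x i) = ∏ i, ∫ t in s i, f i t := by
  rw [volume_restrict_univ_pi, integral_fintype_prod_eq_prod]

theorem integrableOn_univ_pi_prod {s : ι → Set ℝ} {f : ι → ℝ → ℝ}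
    (hf : ∀ i, IntegrableOn (f i) (s i)) :
    IntegrableOn (fun x => ∏ i, f i (x i)) (univ.pi s) := by
  rw [IntegrableOn, volume_restrict_univ_pi]
  exact Integrable.fintype_prod hf

theorem setIntegral_univ_pi_prod_sq (s : Set ℝ) (F : ℝ → ℝ) :
    ∫ x in univ.pi fun _ : ι => s, (∏ i, F (x i)) ^ 2
      = (∫ t in s, F t ^ 2) ^ Fintype.card ι := by
  simp_rw [← Finset.prod_pow]
  rw [setIntegral_univ_pi_prod (fun _ => s) (fun _ t => F t ^ 2), Finset.prod_const,
    Finset.card_univ]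

variable [DecidableEq ι]

theorem Fintype.prod_ite_eq_mul {M : Type*} [CommMonoid M] (a : ι → M) (k : ι) (c : M) :
    ∏ i, (if i = k then c * a i else a i) = c * ∏ i, a i := by
  calc ∏ i, (if i = k then c * a i else a i)
      = ∏ i, (if i = k then c else 1) * a i :=
        Finset.prod_congr rfl fun i _ => by split_ifs <;> simp
    _ = c * ∏ i, a i := by rw [Finset.prod_mul_distrib, Finset.prod_ite_eq']; simp

theorem fderiv_prod_apply_single {f f' : ι → ℝ → ℝ} {x : ι → ℝ}
    (hf : ∀ i, HasDerivAt (f i) (f' i (x i)) (x i)) (k : ι) :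
    fderiv ℝ (fun x => ∏ i, f i (x i)) x (Pi.single k 1)
      = ∏ i, if i = k then f' i (x i) else f i (x i) := by
  have hcoord (i : ι) : HasFDerivAt (fun y : ι → ℝ => f i (y i))
      (f' i (x i) • ContinuousLinearMap.proj i) x :=
    (hf i).comp_hasFDerivAt x (hasFDerivAt_apply (𝕜 := ℝ) i x)
  have hprod := HasFDerivAt.finsetProd (u := Finset.univ) fun i _ => hcoord i
  rw [hprod.fderiv, ← Finset.mul_prod_erase _ _ (Finset.mem_univ k), if_pos rfl,
    Finset.prod_congr rfl fun i hi => if_neg (Finset.ne_of_mem_erase hi)]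
  simp [Pi.single_apply, mul_comm]

theorem setIntegral_univ_pi_sum_sq_fderiv_prod {F F' : ℝ → ℝ} {s : Set ℝ} {r : ℝ}
    (hF : ∀ t, HasDerivAt F (F' t) t) (hF_sq : IntegrableOn (fun t => F t ^ 2) s)
    (hF'_sq : IntegrableOn (fun t => F' t ^ 2) s)
    (hr : ∫ t in s, F' t ^ 2 = r * ∫ t in s, F t ^ 2) :
    ∫ x in univ.pi fun _ : ι => s, ∑ k, (fderiv ℝ (fun x => ∏ i, F (x i)) x (Pi.single k 1)) ^ 2
      = Fintype.card ι * r * ∫ x in univ.pi fun _ : ι => s, (∏ i, F (x i)) ^ 2 := by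
  set G : ι → ι → ℝ → ℝ := fun k i t => if i = k then F' t ^ 2 else F t ^ 2
  have hpartial (x : ι → ℝ) (k : ι) :
      (fderiv ℝ (fun x => ∏ i, F (x i)) x (Pi.single k 1)) ^ 2 = ∏ i, G k i (x i) := by
    rw [fderiv_prod_apply_single (fun i => hF (x i)), ← Finset.prod_pow]
    exact Finset.prod_congr rfl fun i _ => by simp only [G]; split_ifs <;> rfl
  have hG_int (k i : ι) : IntegrableOn (G k i) s := by
    simp only [G]; split_ifs <;> assumption
  have hterm (k : ι) : ∫ x in univ.pi fun _ : ι => s, ∏ i, G k i (x i)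
      = r * ∫ x in univ.pi fun _ : ι => s, (∏ i, F (x i)) ^ 2 := by
    rw [setIntegral_univ_pi_prod, setIntegral_univ_pi_prod_sq, ← Finset.card_univ,
      ← Finset.prod_const, ← Fintype.prod_ite_eq_mul _ k]
    refine Finset.prod_congr rfl fun i _ => ?_
    simp only [G]; split_ifs <;> simp [hr]
  simp_rw [hpartial]
  rw [integral_finsetSum _ fun k _ => integrableOn_univ_pi_prod (hG_int k)]
  simp [hterm, mul_assoc]

end Separable

theorem integral_Ioo_zero_pow {ε : ℝ} (hε : 0 ≤ ε) (n : ℕ) :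
    ∫ t in Ioo 0 ε, t ^ n = ε ^ (n + 1) / (n + 1) := by
  rw [← integral_Ioc_eq_integral_Ioo, ← intervalIntegral.integral_of_le hε, integral_pow]
  simp

theorem integral_Ioo_zero_sq_deriv_pow {ε : ℝ} (hε : 0 < ε) (p : ℕ) :
    ∫ t in Ioo 0 ε, (p * t ^ (p - 1)) ^ 2
      = p ^ 2 * (2 * p + 1) / (2 * p - 1) * ε ^ (-2 : ℤ) * ∫ t in Ioo 0 ε, (t ^ p) ^ 2 := by
  rcases p with _ | n
  · simp
  simp_rw [Nat.add_sub_cancel, mul_pow, ← pow_mul, integral_const_mul,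
    integral_Ioo_zero_pow hε.le]
  push_cast
  rw [show 2 * ((n : ℝ) + 1) - 1 = 2 * n + 1 by ring, zpow_neg, zpow_ofNat]
  field_simp
  ring

theorem Continuous.integrableOn_Ioo {f : ℝ → ℝ} (hf : Continuous f) {a b : ℝ} :
    IntegrableOn f (Ioo a b) :=
  hf.integrableOn_Icc.mono_set Ioo_subset_Icc_self

theorem corner_cut_rayleigh_consistent_mass_general
    (d p : ℕ) (ε : ℝ) (hε : 0 < ε)
    (g : (Fin d → ℝ) → ℝ) (hg : g = fun x => ∏ i, (x i) ^ p) :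
    (∫ x in Set.univ.pi fun _ : Fin d => Set.Ioo (0:ℝ) ε,
        ∑ i, (fderiv ℝ g x (Pi.single i 1)) ^ 2) /
      (∫ x in Set.univ.pi fun _ : Fin d => Set.Ioo (0:ℝ) ε, (g x) ^ 2)
      = (d : ℝ) * (p : ℝ) ^ 2 * (2 * (p : ℝ) + 1) / (2 * (p : ℝ) - 1) *
          ε ^ (-2 : ℤ) := by
  subst hg
  have hmass_pos : 0 < ∫ x in univ.pi fun _ : Fin d => Ioo 0 ε, (∏ i, x i ^ p) ^ 2 := by
    simp_rw [setIntegral_univ_pi_prod_sq (F := fun t => t ^ p), ← pow_mul,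
      integral_Ioo_zero_pow hε.le]
    positivity
  rw [setIntegral_univ_pi_sum_sq_fderiv_prod (F := fun t => t ^ p) (hasDerivAt_pow p)
    (Continuous.integrableOn_Ioo (by fun_prop))
    (Continuous.integrableOn_Ioo (by fun_prop)) (integral_Ioo_zero_sq_deriv_pow hε p),
    mul_div_cancel_right₀ _ hmass_pos.ne', Fintype.card_fin]
  ring

/-- For `g x = ∏ i, (x i)^p` on the cube `(0,ε)^d` (`d,p ≥ 1`, `ε > 0`),
`(∫ ‖∇g‖² dx)/(∫ g² dx) = d·p²·(2p+1)/(2p−1) · ε^(−2)`,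
where `‖∇g‖² = Σᵢ (∂g/∂xᵢ)²`. -/
theorem corner_cut_rayleigh_consistent_mass
    (d p : ℕ) (hd : 1 ≤ d) (hp : 1 ≤ p) (ε : ℝ) (hε : 0 < ε)
    (g : (Fin d → ℝ) → ℝ) (hg : g = fun x => ∏ i, (x i) ^ p) :
    (∫ x in Set.univ.pi fun _ : Fin d => Set.Ioo (0:ℝ) ε,
        ∑ i, (fderiv ℝ g x (Pi.single i 1)) ^ 2) /
      (∫ x in Set.univ.pi fun _ : Fin d => Set.Ioo (0:ℝ) ε, (g x) ^ 2)
      = (d : ℝ) * (p : ℝ) ^ 2 * (2 * (p : ℝ) + 1) / (2 * (p : ℝ) - 1) *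
          ε ^ (-2 : ℤ) :=
  corner_cut_rayleigh_consistent_mass_general d p ε hε g hg
end

section
/- Let p ≥ 1 be a natural number, γ_K > 0, γ_M > 0, and J ≠ 0 real numbers. Define for ε ∈ (0,1] the quotient q(ε) = (∫₀^ε p²·x^(2p−2) dx + γ_K·J²) / (∫₀^ε x^(2p) dx + γ_M·J²). Then q(ε) → γ_K/γ_M as ε → 0⁺, and moreover q(ε) ≤ γ_K/γ_M + p²/((2p−1)·γ_M·J²) for all ε ∈ (0,1]. In particular, adding ghost-penalty terms to both the stiffness and the mass renders the generalized Rayleigh quotient of a cut basis function bounded uniformly in the cut size ε. -/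
open MeasureTheory Filter Set Topology

/-! Both element integrals vanish as `ε → 0`, so the quotient tends to `γK J² / (γM J²)`.
For the uniform bound, drop the mass integral from the denominator and bound the stiffness
integral by its value `p² / (2p - 1)` at `ε = 1`, its integrand being nonnegative. -/

lemma add_div_add_le_div_add_div {K M a b : ℝ} (hK : 0 ≤ K) (hM : 0 ≤ M) (ha : 0 ≤ a)
    (hb : 0 < b) : (K + a) / (M + b) ≤ a / b + K / b := by
  calc (K + a) / (M + b) ≤ (K + a) / b :=
        div_le_div_of_nonneg_left (by positivity) hb (le_add_of_nonneg_left hM)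
    _ = a / b + K / b := by rw [add_div, add_comm]

lemma tendsto_add_div_add {α : Type*} {l : Filter α} {K M : α → ℝ} {a b : ℝ}
    (hK : Tendsto K l (𝓝 0)) (hM : Tendsto M l (𝓝 0)) (hb : b ≠ 0) :
    Tendsto (fun x => (K x + a) / (M x + b)) l (𝓝 (a / b)) := by
  have h := (hK.add_const a).div (hM.add_const b) (by rwa [zero_add])
  rwa [zero_add, zero_add] at h

lemma tendsto_integral_zero_nhds_zero {f : ℝ → ℝ} (hf : Continuous f) :
    Tendsto (fun ε => ∫ x in (0:ℝ)..ε, f x) (𝓝 0) (𝓝 0) := by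
  simpa using
    (intervalIntegral.continuous_primitive (fun _ _ => hf.intervalIntegrable _ _) 0).tendsto 0

lemma integral_zero_one_sq_mul_pow_two_mul_sub_two (p : ℕ) :
    ∫ x in (0:ℝ)..1, (p : ℝ) ^ 2 * x ^ (2 * p - 2) = (p : ℝ) ^ 2 / (2 * p - 1) := by
  rcases p with _ | p
  · simp
  · rw [intervalIntegral.integral_const_mul, integral_pow, show 2 * (p + 1) - 2 = 2 * p by omega]
    push_cast
    ring_nf

theorem ghost_penalty_rayleigh_bounded_general
    (p : ℕ) (γK γM J : ℝ) (hγK : 0 < γK) (hγM : 0 < γM) (hJ : J ≠ 0) :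
    Tendsto (fun ε =>
        ((∫ x in (0:ℝ)..ε, (p : ℝ) ^ 2 * x ^ (2 * p - 2)) + γK * J ^ 2) /
          ((∫ x in (0:ℝ)..ε, x ^ (2 * p)) + γM * J ^ 2))
      (𝓝[>] (0:ℝ)) (𝓝 (γK / γM)) ∧
    ∀ ε ∈ Set.Ioc (0:ℝ) 1,
      ((∫ x in (0:ℝ)..ε, (p : ℝ) ^ 2 * x ^ (2 * p - 2)) + γK * J ^ 2) /
          ((∫ x in (0:ℝ)..ε, x ^ (2 * p)) + γM * J ^ 2)
        ≤ γK / γM + (p : ℝ) ^ 2 / ((2 * (p : ℝ) - 1) * γM * J ^ 2) := by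
  have hJ2 : J ^ 2 ≠ 0 := pow_ne_zero 2 hJ
  have hpenalty : γK * J ^ 2 / (γM * J ^ 2) = γK / γM := mul_div_mul_right _ _ hJ2
  have hstiff_nonneg (x : ℝ) : 0 ≤ (p : ℝ) ^ 2 * x ^ (2 * p - 2) :=
    mul_nonneg (sq_nonneg _) ((show Even (2 * p - 2) from ⟨p - 1, by omega⟩).pow_nonneg x)
  refine ⟨?_, fun ε ⟨hε0, hε1⟩ => ?_⟩
  · rw [← hpenalty]
    refine (tendsto_add_div_add ?_ ?_ (by positivity)).mono_left nhdsWithin_le_nhds <;>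
      exact tendsto_integral_zero_nhds_zero (by fun_prop)
  · have hstiff_le :
        ∫ x in (0:ℝ)..ε, (p : ℝ) ^ 2 * x ^ (2 * p - 2) ≤ (p : ℝ) ^ 2 / (2 * p - 1) := by
      rw [← integral_zero_one_sq_mul_pow_two_mul_sub_two]
      exact intervalIntegral.integral_mono_interval le_rfl hε0.le hε1
        (ae_of_all _ hstiff_nonneg) ((by fun_prop : Continuous _).intervalIntegrable _ _)
    set K := ∫ x in (0:ℝ)..ε, (p : ℝ) ^ 2 * x ^ (2 * p - 2)
    calc _ ≤ γK * J ^ 2 / (γM * J ^ 2) + K / (γM * J ^ 2) :=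
          add_div_add_le_div_add_div
            (intervalIntegral.integral_nonneg hε0.le fun x _ => hstiff_nonneg x)
            (intervalIntegral.integral_nonneg hε0.le fun x _ => (even_two_mul p).pow_nonneg x)
            (by positivity) (by positivity)
      _ ≤ γK / γM + (p : ℝ) ^ 2 / (2 * p - 1) / (γM * J ^ 2) := by rw [hpenalty]; gcongr
      _ = γK / γM + (p : ℝ) ^ 2 / ((2 * (p : ℝ) - 1) * γM * J ^ 2) := by
          rw [div_div, mul_assoc]

/-- With ghost penalties `γ_K, γ_M > 0` and jump `J ≠ 0`, the quotient
`q(ε) = (∫₀^ε p²·x^(2p−2) dx + γ_K·J²)/(∫₀^ε x^(2p) dx + γ_M·J²)` satisfies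
`q(ε) → γ_K/γ_M` as `ε → 0⁺` and `q(ε) ≤ γ_K/γ_M + p²/((2p−1)·γ_M·J²)` on `(0,1]`. -/
theorem ghost_penalty_rayleigh_bounded
    (p : ℕ) (hp : 1 ≤ p) (γK γM J : ℝ) (hγK : 0 < γK) (hγM : 0 < γM) (hJ : J ≠ 0) :
    Tendsto (fun ε =>
        ((∫ x in (0:ℝ)..ε, (p : ℝ) ^ 2 * x ^ (2 * p - 2)) + γK * J ^ 2) /
          ((∫ x in (0:ℝ)..ε, x ^ (2 * p)) + γM * J ^ 2))
      (𝓝[>] (0:ℝ)) (𝓝 (γK / γM)) ∧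
    ∀ ε ∈ Set.Ioc (0:ℝ) 1,
      ((∫ x in (0:ℝ)..ε, (p : ℝ) ^ 2 * x ^ (2 * p - 2)) + γK * J ^ 2) /
          ((∫ x in (0:ℝ)..ε, x ^ (2 * p)) + γM * J ^ 2)
        ≤ γK / γM + (p : ℝ) ^ 2 / ((2 * (p : ℝ) - 1) * γM * J ^ 2) :=
  ghost_penalty_rayleigh_bounded_general p γK γM J hγK hγM hJ
end

section
/- Let f : ℝ → ℝ be continuously differentiable on [0,1] with f(0) ≠ 0, and let β̄ > 0. Define for ε ∈ (0,1] the quotient q(ε) = (∫₀¹ f′(x)² dx + (β̄/ε)·f(ε)²) / (∫₀¹ f(x)² dx). Then ε·q(ε) → β̄·f(0)² / (∫₀¹ f(x)² dx) > 0 as ε → 0⁺; in particular q(ε) → +∞ like ε^(−1). Hence Nitsche's method with the cut-size dependent penalty β = β̄/ε applied to a function that does not vanish at the immersed boundary yields a generalized Rayleigh quotient, and thus a largest eigenvalue, that diverges as the cut size ε tends to zero. -/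
open MeasureTheory Filter Set Topology

/-!
Multiplying the quotient by `ε` cancels the `1/ε` of the penalty, leaving
`(ε ∫₀¹ f′² + β̄ f(ε)²) / ∫₀¹ f²`; the first term vanishes with `ε` and the second tends to
`β̄ f(0)²` by continuity of `f` at the boundary. The limit is positive because `f²` is continuous,
nonnegative and positive at `0`, so that `∫₀¹ f² > 0`.
-/

theorem tendsto_mul_add_div_mul_div_nhdsGT_zero {g : ℝ → ℝ} {c : ℝ}
    (hg : Tendsto g (𝓝[>] 0) (𝓝 c)) (A β B : ℝ) :
    Tendsto (fun ε => ε * ((A + β / ε * g ε) / B)) (𝓝[>] 0) (𝓝 (β * c / B)) := by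
  have hlim : Tendsto (fun ε => (ε * A + β * g ε) / B) (𝓝[>] 0) (𝓝 (β * c / B)) := by
    have hε : Tendsto (fun ε : ℝ => ε) (𝓝[>] 0) (𝓝 0) := nhdsWithin_le_nhds
    simpa using ((hε.mul_const A).add (hg.const_mul β)).div_const B
  refine hlim.congr' ?_
  filter_upwards [self_mem_nhdsWithin] with ε (hε : 0 < ε)
  field_simp

/-- For `f` continuously differentiable on `[0,1]` with `f 0 ≠ 0` and
`β̄ > 0`, the Nitsche quotient
`q(ε) = (∫₀¹ f′² dx + (β̄/ε)·f(ε)²)/(∫₀¹ f² dx)` satisfies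
`ε·q(ε) → β̄·f(0)²/(∫₀¹ f² dx) > 0` as `ε → 0⁺`. -/
theorem nitsche_cut_size_penalty_diverges
    (f : ℝ → ℝ) (hf : ContDiffOn ℝ 1 f (Icc 0 1)) (hf0 : f 0 ≠ 0)
    (βbar : ℝ) (hβ : 0 < βbar) :
    Tendsto (fun ε =>
        ε * (((∫ x in (0:ℝ)..1, (deriv f x) ^ 2) + (βbar / ε) * (f ε) ^ 2) /
          (∫ x in (0:ℝ)..1, (f x) ^ 2)))
      (𝓝[>] (0:ℝ))
      (𝓝 (βbar * (f 0) ^ 2 / (∫ x in (0:ℝ)..1, (f x) ^ 2))) ∧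
    0 < βbar * (f 0) ^ 2 / (∫ x in (0:ℝ)..1, (f x) ^ 2) := by
  have hfc : ContinuousOn f (Icc 0 1) := hf.continuousOn
  have hf_right : Tendsto f (𝓝[>] 0) (𝓝 (f 0)) :=
    (hfc 0 ⟨le_rfl, zero_le_one⟩).mono_of_mem_nhdsWithin (Icc_mem_nhdsGT one_pos)
  have hmass : 0 < ∫ x in (0:ℝ)..1, (f x) ^ 2 :=
    intervalIntegral.integral_pos one_pos (hfc.pow 2) (fun x _ => sq_nonneg (f x))
      ⟨0, ⟨le_rfl, zero_le_one⟩, by positivity⟩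
  exact ⟨tendsto_mul_add_div_mul_div_nhdsGT_zero (hf_right.pow 2) _ _ _, by positivity⟩
end

section
/- Let V be a real vector space, let E and F be real inner product spaces, and let T : V → E, S : V → F, and R : V → F be linear maps. Suppose C ≥ 0 is such that ‖S v‖² ≤ C·‖T v‖² for all v ∈ V, and let β ≥ 2·C. Then for every v ∈ V: ‖T v‖² − 2·⟨S v, R v⟩ + β·‖R v‖² ≥ (1/2)·‖T v‖². In particular the symmetric Nitsche bilinear form a(u,v) = ⟨Tu,Tv⟩ − ⟨Su,Rv⟩ − ⟨Sv,Ru⟩ + β·⟨Ru,Rv⟩ is positive semi-definite on V. -/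
/-! The cross term is absorbed by a weighted AM–GM inequality: from `‖S v‖² ≤ C ‖T v‖²`,
`2 ⟨S v, R v⟩ ≤ 2 ‖S v‖ ‖R v‖ ≤ ½ ‖T v‖² + 2C ‖R v‖²`, and `2C ‖R v‖² ≤ β ‖R v‖²`. -/

theorem two_mul_le_half_sq_add_of_sq_le {a c C : ℝ} (hC : 0 ≤ C) (h : a ^ 2 ≤ C * c ^ 2)
    (b : ℝ) : 2 * a * b ≤ c ^ 2 / 2 + 2 * C * b ^ 2 := by
  refine (abs_le_of_sq_le_sq' ?_ (by positivity)).2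
  calc (2 * a * b) ^ 2 = 4 * a ^ 2 * b ^ 2 := by ring
    _ ≤ 4 * (C * c ^ 2) * b ^ 2 := by gcongr
    _ = 4 * (c ^ 2 / 2) * (2 * C * b ^ 2) := by ring
    _ ≤ (c ^ 2 / 2 + 2 * C * b ^ 2) ^ 2 := four_mul_le_sq_add _ _

theorem two_mul_inner_le_of_norm_sq_le {F : Type*} [SeminormedAddCommGroup F]
    [InnerProductSpace ℝ F] {x : F} {c C : ℝ} (hC : 0 ≤ C) (h : ‖x‖ ^ 2 ≤ C * c ^ 2) (y : F) :
    2 * (inner ℝ x y : ℝ) ≤ c ^ 2 / 2 + 2 * C * ‖y‖ ^ 2 :=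
  calc 2 * (inner ℝ x y : ℝ) ≤ 2 * ‖x‖ * ‖y‖ := by
        rw [mul_assoc]; gcongr; exact real_inner_le_norm x y
    _ ≤ c ^ 2 / 2 + 2 * C * ‖y‖ ^ 2 := two_mul_le_half_sq_add_of_sq_le hC h _

/-- Abstract coercivity of the symmetric Nitsche form for the
second-order problem: if `‖S v‖² ≤ C·‖T v‖²` for all `v` and `β ≥ 2·C`, then
`‖T v‖² − 2·⟨S v, R v⟩ + β·‖R v‖² ≥ (1/2)·‖T v‖²` for all `v`. -/
theorem nitsche_coercivity_second_order
    {V E F : Type*} [AddCommGroup V] [Module ℝ V]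
    [NormedAddCommGroup E] [InnerProductSpace ℝ E]
    [NormedAddCommGroup F] [InnerProductSpace ℝ F]
    (T : V →ₗ[ℝ] E) (S R : V →ₗ[ℝ] F)
    (C : ℝ) (hC : 0 ≤ C) (hSC : ∀ v : V, ‖S v‖ ^ 2 ≤ C * ‖T v‖ ^ 2)
    (β : ℝ) (hβ : 2 * C ≤ β) :
    ∀ v : V,
      (1 / 2) * ‖T v‖ ^ 2 ≤
        ‖T v‖ ^ 2 - 2 * (inner ℝ (S v) (R v) : ℝ) + β * ‖R v‖ ^ 2 := by
  intro v
  have hcross := two_mul_inner_le_of_norm_sq_le hC (hSC v) (R v)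
  have hpenalty : 2 * C * ‖R v‖ ^ 2 ≤ β * ‖R v‖ ^ 2 := by gcongr
  linarith
end

section
/- Let V be a real vector space, let E and F₁, F₂ be real inner product spaces, and let T : V → E, S₁ : V → F₁, R₁ : V → F₁, S₂ : V → F₂, R₂ : V → F₂ be linear maps. Suppose C₁, C₂ ≥ 0 are such that ‖S₁ v‖² ≤ C₁·‖T v‖² and ‖S₂ v‖² ≤ C₂·‖T v‖² for all v ∈ V, and let β₁ ≥ 3·C₁ and β₂ ≥ 3·C₂. Then for every v ∈ V: ‖T v‖² − 2·⟨S₁ v, R₁ v⟩ − 2·⟨S₂ v, R₂ v⟩ + β₁·‖R₁ v‖² + β₂·‖R₂ v‖² ≥ (1/3)·‖T v‖². In particular the corresponding symmetric Nitsche bilinear form for the fourth-order problem, with its two essential boundary conditions, is positive semi-definite on V. -/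
/-!
By Cauchy–Schwarz and Young's inequality with weight 3, each consistency term satisfies
`2⟪Sᵢ v, Rᵢ v⟫ ≤ ‖T v‖² / 3 + 3 Cᵢ ‖Rᵢ v‖²`; the penalties `βᵢ ≥ 3 Cᵢ` absorb the second
summand, and the two terms together cost at most two thirds of `‖T v‖²`.
-/

open RealInnerProductSpace

lemma two_mul_le_div_add_mul_of_sq_le {a b C t k : ℝ} (hC : 0 ≤ C) (ht : 0 ≤ t)
    (hk : 0 < k) (h : a ^ 2 ≤ C * t) : 2 * a * b ≤ t / k + k * C * b ^ 2 := by
  have hsq : (2 * a * b) ^ 2 ≤ (t / k + k * C * b ^ 2) ^ 2 := calc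
    (2 * a * b) ^ 2 = 4 * a ^ 2 * b ^ 2 := by ring
    _ ≤ 4 * (C * t) * b ^ 2 := by gcongr
    _ = 4 * (t / k) * (k * C * b ^ 2) := by field_simp
    _ ≤ (t / k + k * C * b ^ 2) ^ 2 := four_mul_le_sq_add _ _
  exact (le_abs_self _).trans (abs_le_of_sq_le_sq hsq (by positivity))

lemma two_inner_le_of_norm_sq_le {F : Type*} [NormedAddCommGroup F] [InnerProductSpace ℝ F]
    (s r : F) {C t β : ℝ} (hC : 0 ≤ C) (ht : 0 ≤ t) (hs : ‖s‖ ^ 2 ≤ C * t) (hβ : 3 * C ≤ β) :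
    2 * ⟪s, r⟫ ≤ t / 3 + β * ‖r‖ ^ 2 := calc
  2 * ⟪s, r⟫ ≤ 2 * ‖s‖ * ‖r‖ := by
    rw [mul_assoc]; exact mul_le_mul_of_nonneg_left (real_inner_le_norm s r) zero_le_two
  _ ≤ t / 3 + 3 * C * ‖r‖ ^ 2 :=
    two_mul_le_div_add_mul_of_sq_le hC ht three_pos hs
  _ ≤ t / 3 + β * ‖r‖ ^ 2 := by gcongr

/-- Abstract coercivity of the symmetric Nitsche form for the
fourth-order problem with two essential boundary conditions: if
`‖S₁ v‖² ≤ C₁·‖T v‖²`, `‖S₂ v‖² ≤ C₂·‖T v‖²`, `β₁ ≥ 3·C₁` and `β₂ ≥ 3·C₂`, then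
`‖T v‖² − 2·⟨S₁ v, R₁ v⟩ − 2·⟨S₂ v, R₂ v⟩ + β₁·‖R₁ v‖² + β₂·‖R₂ v‖² ≥ (1/3)·‖T v‖²`. -/
theorem nitsche_coercivity_fourth_order
    {V E F₁ F₂ : Type*} [AddCommGroup V] [Module ℝ V]
    [NormedAddCommGroup E] [InnerProductSpace ℝ E]
    [NormedAddCommGroup F₁] [InnerProductSpace ℝ F₁]
    [NormedAddCommGroup F₂] [InnerProductSpace ℝ F₂]
    (T : V →ₗ[ℝ] E) (S₁ R₁ : V →ₗ[ℝ] F₁) (S₂ R₂ : V →ₗ[ℝ] F₂)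
    (C₁ C₂ : ℝ) (hC₁ : 0 ≤ C₁) (hC₂ : 0 ≤ C₂)
    (hSC₁ : ∀ v : V, ‖S₁ v‖ ^ 2 ≤ C₁ * ‖T v‖ ^ 2)
    (hSC₂ : ∀ v : V, ‖S₂ v‖ ^ 2 ≤ C₂ * ‖T v‖ ^ 2)
    (β₁ β₂ : ℝ) (hβ₁ : 3 * C₁ ≤ β₁) (hβ₂ : 3 * C₂ ≤ β₂) :
    ∀ v : V,
      (1 / 3) * ‖T v‖ ^ 2 ≤
        ‖T v‖ ^ 2 - 2 * (inner ℝ (S₁ v) (R₁ v) : ℝ) - 2 * (inner ℝ (S₂ v) (R₂ v) : ℝ)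
          + β₁ * ‖R₁ v‖ ^ 2 + β₂ * ‖R₂ v‖ ^ 2 := by
  intro v
  have hT : 0 ≤ ‖T v‖ ^ 2 := sq_nonneg _
  have h₁ := two_inner_le_of_norm_sq_le (S₁ v) (R₁ v) hC₁ hT (hSC₁ v) hβ₁
  have h₂ := two_inner_le_of_norm_sq_le (S₂ v) (R₂ v) hC₂ hT (hSC₂ v) hβ₂
  linarith
end

section
/- Let λ > 0 and Δt > 0 be real numbers with λ·Δt² < 4. Then every sequence u : ℕ → ℝ satisfying the central difference recurrence u_{n+2} − 2·u_{n+1} + u_n = −λ·Δt²·u_{n+1} for all n ∈ ℕ is bounded, i.e. there exists a constant C (depending on λ·Δt², u₀ and u₁) such that |u_n| ≤ C for all n. -/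
/-! With `b = 2 - λΔt²` the scheme reads `u (n + 2) = b u (n + 1) - u n`, which preserves the
quadratic form `x² + y² - b x y` on consecutive pairs `(u (n + 1), u n)`. The condition
`0 < λΔt² < 4` is exactly `|b| < 2`, under which this form dominates
`(2 - |b|) / 2 · (x² + y²)`, so every orbit stays in a bounded sublevel set. -/

lemma two_sub_abs_div_two_mul_le (b x y : ℝ) :
    (2 - |b|) / 2 * (x ^ 2 + y ^ 2) ≤ x ^ 2 + y ^ 2 - b * x * y := by
  have hxy : 2 * |x| * |y| ≤ x ^ 2 + y ^ 2 := by
    simpa only [sq_abs] using two_mul_le_add_sq |x| |y|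
  have hbxy : b * x * y ≤ |b| * (|x| * |y|) := by
    calc b * x * y ≤ |b * x * y| := le_abs_self _
      _ = |b| * (|x| * |y|) := by rw [abs_mul, abs_mul, mul_assoc]
  nlinarith [mul_le_mul_of_nonneg_left hxy (abs_nonneg b)]

section ThreeTermRecurrence

variable {b : ℝ} {u : ℕ → ℝ}

lemma energy_eq_of_recurrence (hu : ∀ n, u (n + 2) = b * u (n + 1) - u n) (n : ℕ) :
    u (n + 1) ^ 2 + u n ^ 2 - b * u (n + 1) * u n = u 1 ^ 2 + u 0 ^ 2 - b * u 1 * u 0 := by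
  induction n with
  | zero => rfl
  | succ k ih => rw [← ih, hu k]; ring

lemma exists_abs_le_of_recurrence (hb : |b| < 2) (hu : ∀ n, u (n + 2) = b * u (n + 1) - u n) :
    ∃ C : ℝ, ∀ n, |u n| ≤ C := by
  have hc : 0 < (2 - |b|) / 2 := by linarith
  refine ⟨√((u 1 ^ 2 + u 0 ^ 2 - b * u 1 * u 0) / ((2 - |b|) / 2)),
    fun n => Real.abs_le_sqrt ?_⟩
  rw [le_div_iff₀ hc, ← energy_eq_of_recurrence hu n]
  nlinarith [two_sub_abs_div_two_mul_le b (u (n + 1)) (u n), sq_nonneg (u (n + 1))]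

end ThreeTermRecurrence

/-- Stability of the central difference scheme below the critical
time step: if `λ·Δt² < 4` (`λ, Δt > 0`), every sequence satisfying
`u_{n+2} − 2·u_{n+1} + u_n = −λ·Δt²·u_{n+1}` is bounded. -/
theorem central_difference_stable_below_critical
    (lam Δt : ℝ) (hlam : 0 < lam) (hΔt : 0 < Δt) (h : lam * Δt ^ 2 < 4)
    (u : ℕ → ℝ)
    (hrec : ∀ n : ℕ, u (n + 2) - 2 * u (n + 1) + u n = -(lam * Δt ^ 2) * u (n + 1)) :
    ∃ C : ℝ, ∀ n : ℕ, |u n| ≤ C := by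
  have hpos : 0 < lam * Δt ^ 2 := by positivity
  have hb : |2 - lam * Δt ^ 2| < 2 := abs_lt.2 ⟨by linarith, by linarith⟩
  exact exists_abs_le_of_recurrence hb fun n => by linarith [hrec n]
end
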